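/- There exists a euclidean frame and a model on it at which the translation of the 5 axiom fails under the reflexive-insensitive semantics; i.e., the ∘-translation of ◇φ → □◇φ (where ◇φ abbreviates ¬□¬φ and □ψ translates to ∘(ψ∘)∧ψ∘) is not valid on the class of euclidean frames. -/
import Mathlib

inductive RIForm : Type where
  | var : Nat → RIForm
  | neg : RIForm → RIForm
  | and : RIForm → RIForm → RIForm
  | circ : RIForm → RIForm
deriving DecidableEq

def RIForm.imp (φ ψ : RIForm) : RIForm := .neg (.and φ (.neg ψ))
def RIForm.or (φ ψ : RIForm) : RIForm := .neg (.and (.neg φ) (.neg ψ))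
def RIForm.top : RIForm := .neg (.and (.var 0) (.neg (.var 0)))
def RIForm.bot : RIForm := .and (.var 0) (.neg (.var 0))
def RIForm.iff (φ ψ : RIForm) : RIForm := .and (φ.imp ψ) (ψ.imp φ)

def riSat {W : Type} (R : W → W → Prop) (V : Nat → W → Prop) : W → RIForm → Prop
  | w, .var p => V p w
  | w, .neg φ => ¬ riSat R V w φ
  | w, .and φ ψ => riSat R V w φ ∧ riSat R V w ψ
  | w, .circ φ => ¬ riSat R V w φ ∨ ∀ x, R w x → riSat R V x φ

def riValid {W : Type} (R : W → W → Prop) (φ : RIForm) : Prop :=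
  ∀ V w, riSat R V w φ

inductive MForm : Type where
  | var : Nat → MForm
  | neg : MForm → MForm
  | and : MForm → MForm → MForm
  | box : MForm → MForm
deriving DecidableEq

def MForm.imp (φ ψ : MForm) : MForm := .neg (.and φ (.neg ψ))
def MForm.diam (φ : MForm) : MForm := .neg (.box (.neg φ))

def msat {W : Type} (R : W → W → Prop) (V : Nat → W → Prop) : W → MForm → Prop
  | w, .var p => V p w
  | w, .neg φ => ¬ msat R V w φ
  | w, .and φ ψ => msat R V w φ ∧ msat R V w ψ
  | w, .box φ => ∀ x, R w x → msat R V x φ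

def MForm.trans : MForm → RIForm
  | .var p => .var p
  | .neg φ => .neg φ.trans
  | .and φ ψ => .and φ.trans ψ.trans
  | .box φ => .and (.circ φ.trans) φ.trans

theorem euclidean_fails_five_translation :
    ∃ (W : Type) (R : W → W → Prop) (V : Nat → W → Prop) (w : W),
      (∀ x y z, R x y → R x z → R y z) ∧
      ¬ riSat R V w (((MForm.var 0).diam.imp (MForm.var 0).diam.box).trans) := by
  refine ⟨Bool, fun _ y => y = true, fun _ x => x = false, false, fun x y z _ h => h, ?_⟩
  simp [MForm.trans, MForm.diam, MForm.imp, RIForm.imp, riSat]
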